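/- Let d ≥ 1 and ζ > 0. (a) For all u, v : ℤ^d → ℝ with ‖u‖_ζ, ‖v‖_ζ < ∞, one has ‖u*v‖_ζ ≤ ‖u‖_ζ‖v‖_ζ. (b) If ‖v − δ‖_ζ < 1, then the Neumann series v^{−1} = Σ_{n=0}^∞ (δ − v)^{*n} converges in the norm ‖·‖_ζ, satisfies v*v^{−1} = δ, and ‖v^{−1} − δ‖_ζ ≤ ‖v − δ‖_ζ/(1 − ‖v − δ‖_ζ). -/

import Mathlib

open MeasureTheory Filter

noncomputable section

namespace SO

variable {d : ℕ}

/-- Euclidean norm of a lattice point. -/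
def znorm (x : Fin d → ℤ) : ℝ := Real.sqrt (∑ i, ((x i : ℝ)) ^ 2)

/-- Euclidean norm of a point of ℝ^d. -/
def rnorm (k : Fin d → ℝ) : ℝ := Real.sqrt (∑ i, (k i) ^ 2)

/-- `⟨x⟩ = max{|x|, 1}`. -/
def nn (x : Fin d → ℤ) : ℝ := max (znorm x) 1

/-- Kronecker delta at the origin. -/
def kdelta (x : Fin d → ℤ) : ℝ := if x = 0 then 1 else 0

/-- Discrete convolution on ℤ^d. -/
def conv (f g : (Fin d → ℤ) → ℝ) (x : Fin d → ℤ) : ℝ := ∑' y, f (x - y) * g y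

/-- n-fold convolution power. -/
def convpow (f : (Fin d → ℤ) → ℝ) : ℕ → (Fin d → ℤ) → ℝ
  | 0 => kdelta
  | n + 1 => conv f (convpow f n)

/-- ℤ^d-symmetry of a function on ℤ^d : invariance under permutations of the
coordinates and reflections in coordinate hyperplanes. -/
def ZdSymm (f : (Fin d → ℤ) → ℝ) : Prop :=
  ∀ (σ : Equiv.Perm (Fin d)) (e : Fin d → ℤ), (∀ i, e i = 1 ∨ e i = -1) →
    ∀ x, f (fun i => e i * x (σ i)) = f x

/-- ℤ^d-symmetry of a function on ℝ^d. -/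
def RdSymm (v : (Fin d → ℝ) → ℝ) : Prop :=
  ∀ (σ : Equiv.Perm (Fin d)) (e : Fin d → ℝ), (∀ i, e i = 1 ∨ e i = -1) →
    ∀ x, v (fun i => e i * x (σ i)) = v x

/-- Partial derivative in coordinate direction `i`. -/
def pd {E : Type*} [NormedAddCommGroup E] [NormedSpace ℝ E] (i : Fin d)
    (f : (Fin d → ℝ) → E) : (Fin d → ℝ) → E :=
  fun x => fderiv ℝ f x (Pi.single i 1)

/-- Multi-index partial derivative `∇^α`. -/
def mderiv {E : Type*} [NormedAddCommGroup E] [NormedSpace ℝ E] (α : Fin d → ℕ)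
    (f : (Fin d → ℝ) → E) : (Fin d → ℝ) → E :=
  ((List.finRange d).flatMap fun i => List.replicate (α i) i).foldr (fun i g => pd i g) f

/-- Degree `|α|` of a multi-index. -/
def deg (α : Fin d → ℕ) : ℕ := ∑ i, α i

/-- The torus `(−π, π]^d`. -/
def Td (d : ℕ) : Set (Fin d → ℝ) := Set.univ.pi fun _ => Set.Ioc (-Real.pi) Real.pi

/-- Fourier transform of a (summable) function on ℤ^d. -/
def ft (h : (Fin d → ℤ) → ℝ) (k : Fin d → ℝ) : ℂ :=
  ∑' x : Fin d → ℤ, (h x : ℂ) * Complex.exp (Complex.I * ((∑ i, k i * (x i : ℝ) : ℝ) : ℂ))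

/-- Normalized `L^p` norm on the torus. -/
def lpT (p : ℝ) (g : (Fin d → ℝ) → ℂ) : ℝ :=
  ((1 / (2 * Real.pi) ^ d) * ∫ k in Td d, ‖g k‖ ^ p) ^ (1 / p)

/-- Smooth `2π`-periodic test function. -/
def PeriodicSmooth (φ : (Fin d → ℝ) → ℂ) : Prop :=
  ContDiff ℝ (⊤ : ℕ∞) φ ∧ ∀ (x : Fin d → ℝ) (i : Fin d), φ (x + Pi.single i (2 * Real.pi)) = φ x

/-- `g` has `α`-th weak derivative `gα` on the torus, in the sense of the
integration-by-parts identity against smooth periodic test functions. -/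
def HasWeakDeriv (α : Fin d → ℕ) (g gα : (Fin d → ℝ) → ℂ) : Prop :=
  ∀ φ : (Fin d → ℝ) → ℂ, PeriodicSmooth φ →
    ∫ k in Td d, g k * mderiv α φ k = (-1 : ℂ) ^ deg α * ∫ k in Td d, gα k * φ k

/-- The hypotheses on the spread-out kernel `v`: nonnegative, bounded,
ℤ^d-symmetric, supported in `[-1,1]^d`, with piecewise continuous mixed
derivative `∂^d v/∂x_1⋯∂x_d`, and total integral 1. -/
structure GoodKernel (d : ℕ) (v : (Fin d → ℝ) → ℝ) : Prop where
  nonneg : ∀ x, 0 ≤ v x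
  bounded : ∃ M, ∀ x, v x ≤ M
  symm : RdSymm v
  supp : ∀ x, v x ≠ 0 → ∀ i, |x i| ≤ 1
  piecewiseCont : ∃ S : Set (Fin d → ℝ), IsClosed S ∧ volume S = 0 ∧
    ContinuousOn (mderiv (fun _ => (1 : ℕ)) v) Sᶜ
  integral_one : ∫ x, v x = 1

/-- Normalization sum for the step distribution. -/
def sumv (v : (Fin d → ℝ) → ℝ) (L : ℝ) : ℝ := ∑' y : Fin d → ℤ, v fun i => (y i : ℝ) / L

/-- Spread-out step distribution `D`. -/
def DSO (v : (Fin d → ℝ) → ℝ) (L : ℝ) (x : Fin d → ℤ) : ℝ :=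
  v (fun i => (x i : ℝ) / L) / sumv v L

/-- Variance `σ²` of `D`. -/
def sigSq (v : (Fin d → ℝ) → ℝ) (L : ℝ) : ℝ := ∑' x : Fin d → ℤ, znorm x ^ 2 * DSO v L x

/-- Nearest-neighbour step distribution. -/
def Dnn (x : Fin d → ℤ) : ℝ := if (∑ i, (x i) ^ 2) = 1 then 1 / (2 * (d : ℝ)) else 0

/-- Fourier integral `x ↦ ∫_{𝕋^d} e^{−ik·x}/F̂(k) dk/(2π)^d`. -/
def fint (F : (Fin d → ℤ) → ℝ) (x : Fin d → ℤ) : ℝ :=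
  (1 / (2 * Real.pi) ^ d) *
    (∫ k in Td d,
      Complex.exp (-Complex.I * ((∑ i, k i * (x i : ℝ) : ℝ) : ℂ)) / ft F k).re

/-- Spread-out Green function `S_μ`. -/
def SGreen (v : (Fin d → ℝ) → ℝ) (L : ℝ) (μ : ℝ) (x : Fin d → ℤ) : ℝ :=
  fint (fun y => kdelta y - μ * DSO v L y) x

/-- Nearest-neighbour Green function `C_μ`. -/
def CGreen (μ : ℝ) (x : Fin d → ℤ) : ℝ :=
  fint (fun y => kdelta y - μ * Dnn y) x

/-- The constant `a_d = dΓ((d−2)/2)/(2π^{d/2})`. -/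
def aGauss (d : ℕ) : ℝ := d * Real.Gamma (((d : ℝ) - 2) / 2) / (2 * Real.pi ^ ((d : ℝ) / 2))

end SO

/-- The weighted norm `‖v‖_ζ = max{2^{ζ+1}Σ_x|v(x)|, sup_x |x|^ζ|v(x)|}`,
valued in `[0,∞]`. -/
noncomputable def zetaNorm {d : ℕ} (ζ : ℝ) (f : (Fin d → ℤ) → ℝ) : ENNReal :=
  max (ENNReal.ofReal ((2 : ℝ) ^ (ζ + 1)) * ∑' x : Fin d → ℤ, ENNReal.ofReal |f x|)
      (⨆ x : Fin d → ℤ, ENNReal.ofReal (SO.znorm x ^ ζ * |f x|))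

open SO ENNReal

namespace ZN

variable {d : ℕ} {ζ : ℝ}

/-- ℓ¹ part. -/
def A (f : (Fin d → ℤ) → ℝ) : ℝ≥0∞ := ∑' x, ENNReal.ofReal |f x|

/-- weighted sup part. -/
def B (ζ : ℝ) (f : (Fin d → ℤ) → ℝ) : ℝ≥0∞ :=
  ⨆ x, ENNReal.ofReal (SO.znorm x ^ ζ) * ENNReal.ofReal |f x|

lemma znorm_nonneg (x : Fin d → ℤ) : 0 ≤ znorm x := Real.sqrt_nonneg _

lemma zetaNorm_eq (f : (Fin d → ℤ) → ℝ) :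
    zetaNorm ζ f = max (ENNReal.ofReal ((2:ℝ) ^ (ζ+1)) * A f) (B ζ f) := by
  unfold zetaNorm A B
  congr 1
  exact iSup_congr fun x => ENNReal.ofReal_mul (Real.rpow_nonneg (znorm_nonneg x) ζ)

lemma cA_le (f : (Fin d → ℤ) → ℝ) :
    ENNReal.ofReal ((2:ℝ) ^ (ζ+1)) * A f ≤ zetaNorm ζ f := by
  rw [zetaNorm_eq]; exact le_max_left _ _

lemma B_le (f : (Fin d → ℤ) → ℝ) : B ζ f ≤ zetaNorm ζ f := by
  rw [zetaNorm_eq]; exact le_max_right _ _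

def emb (x : Fin d → ℤ) : EuclideanSpace ℝ (Fin d) := WithLp.toLp 2 (fun i => (x i : ℝ))

lemma znorm_eq_norm (x : Fin d → ℤ) : znorm x = ‖emb x‖ := by
  rw [EuclideanSpace.norm_eq]
  unfold znorm
  congr 1
  exact Finset.sum_congr rfl fun i _ => by rw [Real.norm_eq_abs, sq_abs]; rfl

lemma znorm_triangle (a b : Fin d → ℤ) : znorm (a + b) ≤ znorm a + znorm b := by
  rw [znorm_eq_norm, znorm_eq_norm, znorm_eq_norm]
  have : emb (a + b) = emb a + emb b := by
    ext i
    show (((a + b) i : ℤ) : ℝ) = (a i : ℝ) + (b i : ℝ)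
    rw [Pi.add_apply]
    push_cast
    ring
  rw [this]
  exact norm_add_le _ _

lemma ofReal_abs_tsum_le {ι : Type*} (g : ι → ℝ) :
    ENNReal.ofReal |∑' i, g i| ≤ ∑' i, ENNReal.ofReal |g i| := by
  by_cases h : Summable g
  · have habs : Summable fun i => |g i| := summable_abs_iff.mpr h
    calc ENNReal.ofReal |∑' i, g i| ≤ ENNReal.ofReal (∑' i, |g i|) := by
          apply ENNReal.ofReal_le_ofReal
          simpa [Real.norm_eq_abs] using norm_tsum_le_tsum_norm (f := g) (by simpa [Real.norm_eq_abs] using habs)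
      _ = ∑' i, ENNReal.ofReal |g i| :=
          ENNReal.ofReal_tsum_of_nonneg (fun i => abs_nonneg _) habs
  · rw [tsum_eq_zero_of_not_summable h]; simp

lemma summable_of_tsum_ne_top {ι : Type*} {g : ι → ℝ}
    (h : ∑' i, ENNReal.ofReal |g i| ≠ ⊤) : Summable g := by
  have : ∀ i, ENNReal.ofReal |g i| = (‖g i‖₊ : ℝ≥0∞) := fun i => by
    rw [← Real.norm_eq_abs]; exact ofReal_norm _
  rw [tsum_congr this] at h
  exact Summable.of_nnnorm (ENNReal.tsum_coe_ne_top_iff_summable.mp h)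

lemma tsum_sub_eq {d : ℕ} (F : (Fin d → ℤ) → ℝ≥0∞) (x : Fin d → ℤ) :
    ∑' y, F (x - y) = ∑' y, F y := (Equiv.subLeft x).tsum_eq F

lemma tsum_sub_eq' {d : ℕ} (F : (Fin d → ℤ) → ℝ≥0∞) (y : Fin d → ℤ) :
    ∑' x, F (x - y) = ∑' x, F x := (Equiv.subRight y).tsum_eq F

lemma A_conv_le (u w : (Fin d → ℤ) → ℝ) : A (conv u w) ≤ A u * A w := by
  have step1 : A (conv u w) ≤ ∑' x : Fin d → ℤ, ∑' y : Fin d → ℤ,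
      ENNReal.ofReal |u (x - y)| * ENNReal.ofReal |w y| := by
    apply ENNReal.tsum_le_tsum
    intro x
    calc ENNReal.ofReal |conv u w x| ≤ ∑' y, ENNReal.ofReal |u (x - y) * w y| :=
          ofReal_abs_tsum_le _
      _ = ∑' y, ENNReal.ofReal |u (x - y)| * ENNReal.ofReal |w y| :=
          tsum_congr fun y => by rw [abs_mul, ENNReal.ofReal_mul (abs_nonneg _)]
  calc A (conv u w) ≤ ∑' x : Fin d → ℤ, ∑' y : Fin d → ℤ,
        ENNReal.ofReal |u (x - y)| * ENNReal.ofReal |w y| := step1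
    _ = ∑' y : Fin d → ℤ, ∑' x : Fin d → ℤ,
        ENNReal.ofReal |u (x - y)| * ENNReal.ofReal |w y| := ENNReal.tsum_comm
    _ = ∑' y : Fin d → ℤ, (∑' x : Fin d → ℤ, ENNReal.ofReal |u (x - y)|) *
        ENNReal.ofReal |w y| := tsum_congr fun y => ENNReal.tsum_mul_right
    _ = ∑' y : Fin d → ℤ, A u * ENNReal.ofReal |w y| := by
        refine tsum_congr fun y => ?_
        rw [tsum_sub_eq' (fun z => ENNReal.ofReal |u z|) y]
        rfl
    _ = A u * A w := ENNReal.tsum_mul_left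

lemma rpow_add_le (hζ : 0 < ζ) {a b : ℝ} (ha : 0 ≤ a) (hb : 0 ≤ b) :
    (a + b) ^ ζ ≤ 2 ^ ζ * (a ^ ζ + b ^ ζ) := by
  have h1 : a + b ≤ 2 * max a b := by
    rcases le_total a b with h | h
    · rw [max_eq_right h]; linarith
    · rw [max_eq_left h]; linarith
  calc (a + b) ^ ζ ≤ (2 * max a b) ^ ζ := Real.rpow_le_rpow (by positivity) h1 hζ.le
    _ = 2 ^ ζ * (max a b) ^ ζ := Real.mul_rpow (by norm_num) (le_max_of_le_left ha)
    _ ≤ 2 ^ ζ * (a ^ ζ + b ^ ζ) := by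
        apply mul_le_mul_of_nonneg_left _ (Real.rpow_nonneg (by norm_num) ζ)
        rcases le_total a b with h | h
        · rw [max_eq_right h]; nlinarith [Real.rpow_nonneg ha ζ]
        · rw [max_eq_left h]; nlinarith [Real.rpow_nonneg hb ζ]

lemma ofReal_znorm_rpow_le (hζ : 0 < ζ) (x y : Fin d → ℤ) :
    ENNReal.ofReal (znorm x ^ ζ) ≤ ENNReal.ofReal ((2:ℝ) ^ ζ) *
      (ENNReal.ofReal (znorm (x - y) ^ ζ) + ENNReal.ofReal (znorm y ^ ζ)) := by
  rw [← ENNReal.ofReal_add (Real.rpow_nonneg (znorm_nonneg _) ζ)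
      (Real.rpow_nonneg (znorm_nonneg _) ζ),
    ← ENNReal.ofReal_mul (Real.rpow_nonneg (by norm_num) ζ)]
  apply ENNReal.ofReal_le_ofReal
  have htri : znorm x ≤ znorm (x - y) + znorm y := by
    have h := znorm_triangle (x - y) y
    rwa [sub_add_cancel] at h
  calc znorm x ^ ζ ≤ (znorm (x - y) + znorm y) ^ ζ :=
        Real.rpow_le_rpow (znorm_nonneg _) htri hζ.le
    _ ≤ 2 ^ ζ * (znorm (x - y) ^ ζ + znorm y ^ ζ) :=
        rpow_add_le hζ (znorm_nonneg _) (znorm_nonneg _)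

lemma B_conv_le (hζ : 0 < ζ) (u w : (Fin d → ℤ) → ℝ) :
    B ζ (conv u w) ≤ ENNReal.ofReal ((2:ℝ) ^ ζ) * (B ζ u * A w + A u * B ζ w) := by
  apply iSup_le
  intro x
  calc ENNReal.ofReal (znorm x ^ ζ) * ENNReal.ofReal |conv u w x|
      ≤ ENNReal.ofReal (znorm x ^ ζ) * ∑' y, ENNReal.ofReal |u (x - y) * w y| :=
        mul_le_mul_right (ofReal_abs_tsum_le _) _
    _ = ∑' y, ENNReal.ofReal (znorm x ^ ζ) *
        (ENNReal.ofReal |u (x - y)| * ENNReal.ofReal |w y|) := by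
        rw [← ENNReal.tsum_mul_left]
        exact tsum_congr fun y => by rw [abs_mul, ENNReal.ofReal_mul (abs_nonneg _)]
    _ ≤ ∑' y, (ENNReal.ofReal ((2:ℝ) ^ ζ) *
        (ENNReal.ofReal (znorm (x - y) ^ ζ) + ENNReal.ofReal (znorm y ^ ζ))) *
        (ENNReal.ofReal |u (x - y)| * ENNReal.ofReal |w y|) :=
        ENNReal.tsum_le_tsum fun y => mul_le_mul_left (ofReal_znorm_rpow_le hζ x y) _
    _ = ∑' y, ENNReal.ofReal ((2:ℝ) ^ ζ) *
        ((ENNReal.ofReal (znorm (x - y) ^ ζ) * ENNReal.ofReal |u (x - y)|) *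
          ENNReal.ofReal |w y| +
         ENNReal.ofReal |u (x - y)| *
          (ENNReal.ofReal (znorm y ^ ζ) * ENNReal.ofReal |w y|)) :=
        tsum_congr fun y => by ring
    _ ≤ ∑' y, ENNReal.ofReal ((2:ℝ) ^ ζ) *
        (B ζ u * ENNReal.ofReal |w y| + ENNReal.ofReal |u (x - y)| * B ζ w) := by
        refine ENNReal.tsum_le_tsum fun y => mul_le_mul_right (add_le_add ?_ ?_) _
        · exact mul_le_mul_left
            (le_iSup (fun z => ENNReal.ofReal (znorm z ^ ζ) * ENNReal.ofReal |u z|) (x - y)) _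
        · exact mul_le_mul_right
            (le_iSup (fun z => ENNReal.ofReal (znorm z ^ ζ) * ENNReal.ofReal |w z|) y) _
    _ = ENNReal.ofReal ((2:ℝ) ^ ζ) * (B ζ u * A w + A u * B ζ w) := by
        rw [ENNReal.tsum_mul_left]
        congr 1
        rw [ENNReal.tsum_add]
        congr 1
        · exact ENNReal.tsum_mul_left
        · rw [ENNReal.tsum_mul_right]
          congr 1
          exact tsum_sub_eq (fun z => ENNReal.ofReal |u z|) x

lemma c_eq : ENNReal.ofReal ((2:ℝ) ^ (ζ + 1)) = ENNReal.ofReal ((2:ℝ) ^ ζ) * 2 := by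
  rw [Real.rpow_add (by norm_num : (0:ℝ) < 2), Real.rpow_one,
    ENNReal.ofReal_mul (Real.rpow_nonneg (by norm_num) ζ), ENNReal.ofReal_ofNat]

theorem zetaNorm_conv_le (hζ : 0 < ζ) (u w : (Fin d → ℤ) → ℝ) :
    zetaNorm ζ (conv u w) ≤ zetaNorm ζ u * zetaNorm ζ w := by
  set c := ENNReal.ofReal ((2:ℝ) ^ (ζ + 1)) with hc
  have hc0 : c ≠ 0 := by
    rw [hc, Ne, ENNReal.ofReal_eq_zero, not_le]
    positivity
  have hct : c ≠ ⊤ := ENNReal.ofReal_ne_top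
  have hc1 : 1 ≤ c := by
    rw [hc, ← ENNReal.ofReal_one]
    exact ENNReal.ofReal_le_ofReal (Real.one_le_rpow (by norm_num) (by linarith))
  have hinv : ∀ f : (Fin d → ℤ) → ℝ, A f ≤ c⁻¹ * zetaNorm ζ f := by
    intro f
    have h1 : c⁻¹ * (c * A f) = A f := by
      rw [← mul_assoc, ENNReal.inv_mul_cancel hc0 hct, one_mul]
    rw [← h1]
    exact mul_le_mul_right (cA_le f) _
  rw [zetaNorm_eq (conv u w)]
  apply max_le
  · calc c * A (conv u w) ≤ c * (A u * A w) := mul_le_mul_right (A_conv_le u w) c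
      _ = (c * A u) * A w := by ring
      _ ≤ zetaNorm ζ u * A w := mul_le_mul_left (cA_le u) _
      _ ≤ zetaNorm ζ u * (c * A w) :=
          mul_le_mul_right (le_mul_of_one_le_left (zero_le) hc1) _
      _ ≤ zetaNorm ζ u * zetaNorm ζ w := mul_le_mul_right (cA_le w) _
  · calc B ζ (conv u w)
        ≤ ENNReal.ofReal ((2:ℝ) ^ ζ) * (B ζ u * A w + A u * B ζ w) := B_conv_le hζ u w
      _ ≤ ENNReal.ofReal ((2:ℝ) ^ ζ) *
          (zetaNorm ζ u * (c⁻¹ * zetaNorm ζ w) + (c⁻¹ * zetaNorm ζ u) * zetaNorm ζ w) :=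
          mul_le_mul_right (add_le_add (mul_le_mul' (B_le u) (hinv w))
            (mul_le_mul' (hinv u) (B_le w))) _
      _ = (ENNReal.ofReal ((2:ℝ) ^ ζ) * 2) * (c⁻¹ * (zetaNorm ζ u * zetaNorm ζ w)) := by
          ring
      _ = (c * c⁻¹) * (zetaNorm ζ u * zetaNorm ζ w) := by rw [← c_eq, hc, mul_assoc]
      _ = zetaNorm ζ u * zetaNorm ζ w := by
          rw [ENNReal.mul_inv_cancel hc0 hct, one_mul]

lemma abs_le_A (f : (Fin d → ℤ) → ℝ) (x : Fin d → ℤ) :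
    ENNReal.ofReal |f x| ≤ A f := ENNReal.le_tsum x

lemma A_kdelta : A (SO.kdelta : (Fin d → ℤ) → ℝ) = 1 := by
  unfold A
  rw [tsum_eq_single 0 (fun y hy => by simp [SO.kdelta, hy])]
  simp [SO.kdelta]

lemma A_le (f : (Fin d → ℤ) → ℝ) :
    A f ≤ (ENNReal.ofReal ((2:ℝ) ^ (ζ + 1)))⁻¹ * zetaNorm ζ f := by
  set c := ENNReal.ofReal ((2:ℝ) ^ (ζ + 1)) with hc
  have hc0 : c ≠ 0 := by rw [hc, Ne, ENNReal.ofReal_eq_zero, not_le]; positivity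
  have hct : c ≠ ⊤ := ENNReal.ofReal_ne_top
  have h1 : c⁻¹ * (c * A f) = A f := by
    rw [← mul_assoc, ENNReal.inv_mul_cancel hc0 hct, one_mul]
  rw [← h1]
  exact mul_le_mul_right (cA_le f) _

lemma zetaNorm_congr {f g : (Fin d → ℤ) → ℝ} (h : ∀ x, f x = g x) :
    zetaNorm ζ f = zetaNorm ζ g := congrArg (zetaNorm ζ) (funext h)

lemma zetaNorm_neg (f : (Fin d → ℤ) → ℝ) :
    zetaNorm ζ (fun x => -f x) = zetaNorm ζ f := by
  unfold zetaNorm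
  simp only [abs_neg]

lemma conv_kdelta (f : (Fin d → ℤ) → ℝ) (x : Fin d → ℤ) : conv f kdelta x = f x := by
  unfold conv
  rw [tsum_eq_single 0 (fun y hy => by simp [SO.kdelta, hy])]
  simp [SO.kdelta]

lemma zetaNorm_convpow_le (hζ : 0 < ζ) (a : (Fin d → ℤ) → ℝ) (n : ℕ) :
    zetaNorm ζ (convpow a (n + 1)) ≤ zetaNorm ζ a ^ (n + 1) := by
  induction n with
  | zero =>
    rw [pow_one]
    exact le_of_eq (zetaNorm_congr (conv_kdelta a))
  | succ n ih =>
    calc zetaNorm ζ (convpow a (n + 2)) = zetaNorm ζ (conv a (convpow a (n + 1))) := rfl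
      _ ≤ zetaNorm ζ a * zetaNorm ζ (convpow a (n + 1)) := zetaNorm_conv_le hζ _ _
      _ ≤ zetaNorm ζ a * zetaNorm ζ a ^ (n + 1) := mul_le_mul_right ih _
      _ = zetaNorm ζ a ^ (n + 2) := by rw [pow_succ (zetaNorm ζ a) (n + 1)]; ring

lemma A_tsum_le (h : ℕ → (Fin d → ℤ) → ℝ) :
    A (fun x => ∑' n, h n x) ≤ ∑' n, A (h n) := by
  calc A (fun x => ∑' n, h n x) ≤ ∑' x : Fin d → ℤ, ∑' n, ENNReal.ofReal |h n x| :=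
      ENNReal.tsum_le_tsum fun x => ofReal_abs_tsum_le _
    _ = ∑' n, A (h n) := ENNReal.tsum_comm

lemma zetaNorm_tsum_le (h : ℕ → (Fin d → ℤ) → ℝ) :
    zetaNorm ζ (fun x => ∑' n, h n x) ≤ ∑' n, zetaNorm ζ (h n) := by
  rw [zetaNorm_eq]
  apply max_le
  · calc ENNReal.ofReal ((2:ℝ) ^ (ζ + 1)) * A (fun x => ∑' n, h n x)
        ≤ ENNReal.ofReal ((2:ℝ) ^ (ζ + 1)) * ∑' n, A (h n) :=
        mul_le_mul_right (A_tsum_le h) _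
      _ = ∑' n, ENNReal.ofReal ((2:ℝ) ^ (ζ + 1)) * A (h n) := ENNReal.tsum_mul_left.symm
      _ ≤ ∑' n, zetaNorm ζ (h n) := ENNReal.tsum_le_tsum fun n => cA_le _
  · apply iSup_le
    intro x
    calc ENNReal.ofReal (znorm x ^ ζ) * ENNReal.ofReal |∑' n, h n x|
        ≤ ENNReal.ofReal (znorm x ^ ζ) * ∑' n, ENNReal.ofReal |h n x| :=
        mul_le_mul_right (ofReal_abs_tsum_le _) _
      _ = ∑' n, ENNReal.ofReal (znorm x ^ ζ) * ENNReal.ofReal |h n x| :=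
        ENNReal.tsum_mul_left.symm
      _ ≤ ∑' n, B ζ (h n) := ENNReal.tsum_le_tsum fun n =>
          le_iSup (fun z => ENNReal.ofReal (znorm z ^ ζ) * ENNReal.ofReal |h n z|) x
      _ ≤ ∑' n, zetaNorm ζ (h n) := ENNReal.tsum_le_tsum fun n => B_le _

lemma summable_conv_term {u w : (Fin d → ℤ) → ℝ}
    (hu : Summable fun z => |u z|) (hw : Summable fun z => |w z|) (x : Fin d → ℤ) :
    Summable fun y => u (x - y) * w y := by
  apply Summable.of_abs
  apply Summable.of_nonneg_of_le (fun y => abs_nonneg _) (fun y => ?_)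
    (hw.mul_left (∑' z, |u z|))
  rw [abs_mul]
  exact mul_le_mul_of_nonneg_right (Summable.le_tsum hu (x - y) fun j _ => abs_nonneg _) (abs_nonneg _)

end ZN

open SO ZN

/-- Banach algebra and Neumann series, Section 4:
submultiplicativity of `‖·‖_ζ` under convolution, and convergence of the Neumann
series for the deconvolution of `v` when `‖v − δ‖_ζ < 1`. -/
theorem banach_algebra_neumann
    (d : ℕ) (hd : 1 ≤ d) (ζ : ℝ) (hζ : 0 < ζ) :
    (∀ u w : (Fin d → ℤ) → ℝ, zetaNorm ζ u ≠ ⊤ → zetaNorm ζ w ≠ ⊤ →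
      zetaNorm ζ (SO.conv u w) ≤ zetaNorm ζ u * zetaNorm ζ w) ∧
    (∀ w : (Fin d → ℤ) → ℝ, zetaNorm ζ (fun x => w x - SO.kdelta x) < 1 →
      ∃ winv : (Fin d → ℤ) → ℝ,
        (∀ x : Fin d → ℤ,
          winv x = ∑' n : ℕ, SO.convpow (fun y => SO.kdelta y - w y) n x) ∧
        Filter.Tendsto (fun N : ℕ => zetaNorm ζ
            (fun x => (∑ n ∈ Finset.range N,
              SO.convpow (fun y => SO.kdelta y - w y) n x) - winv x))
          Filter.atTop (nhds 0) ∧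
        (∀ x : Fin d → ℤ, SO.conv w winv x = SO.kdelta x) ∧
        zetaNorm ζ (fun x => winv x - SO.kdelta x) ≤
          zetaNorm ζ (fun x => w x - SO.kdelta x) /
            (1 - zetaNorm ζ (fun x => w x - SO.kdelta x))) := by
  constructor
  · intro u w _ _
    exact zetaNorm_conv_le hζ u w
  · intro w hw
    set a : (Fin d → ℤ) → ℝ := fun y => SO.kdelta y - w y with ha
    set ρ : ℝ≥0∞ := zetaNorm ζ (fun x => w x - SO.kdelta x) with hρdef
    have hρa : zetaNorm ζ a = ρ := by
      rw [hρdef, ← zetaNorm_neg (fun x => w x - SO.kdelta x)]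
      exact zetaNorm_congr fun x => by simp [ha]
    have hρ1 : ρ < 1 := hw
    have hρt : ρ ≠ ⊤ := (hρ1.trans_le le_top).ne
    have hone0 : (1 : ℝ≥0∞) - ρ ≠ 0 := by
      rw [Ne, tsub_eq_zero_iff_le, not_le]
      exact hρ1
    have honet : ((1 : ℝ≥0∞) - ρ)⁻¹ ≠ ⊤ := ENNReal.inv_ne_top.mpr hone0
    have hgeo : ∑' n : ℕ, ρ ^ n = (1 - ρ)⁻¹ := ENNReal.tsum_geometric ρ
    have hpow : ∀ n, zetaNorm ζ (convpow a (n + 1)) ≤ ρ ^ (n + 1) := fun n =>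
      (zetaNorm_convpow_le hζ a n).trans (by rw [hρa])
    set c : ℝ≥0∞ := ENNReal.ofReal ((2:ℝ) ^ (ζ + 1)) with hc
    have hc0 : c ≠ 0 := by rw [hc, Ne, ENNReal.ofReal_eq_zero, not_le]; positivity
    have hcit : c⁻¹ ≠ ⊤ := ENNReal.inv_ne_top.mpr hc0
    have hAn : ∀ n, A (convpow a (n + 1)) ≤ c⁻¹ * ρ ^ (n + 1) := fun n =>
      (A_le _).trans (mul_le_mul_right (hpow n) _)
    have hAa : A a ≤ c⁻¹ * ρ := by
      have := A_le (ζ := ζ) a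
      rw [hρa] at this
      exact this
    have hAat : A a ≠ ⊤ :=
      ne_top_of_le_ne_top (ENNReal.mul_ne_top hcit hρt) hAa
    -- summability of the series of convolution powers, pointwise
    have hsum1 : ∀ x, Summable fun n => convpow a (n + 1) x := by
      intro x
      apply summable_of_tsum_ne_top
      have hb : ∑' n : ℕ, ENNReal.ofReal |convpow a (n + 1) x| ≤ c⁻¹ * ((1 - ρ)⁻¹ * ρ) := by
        calc ∑' n : ℕ, ENNReal.ofReal |convpow a (n + 1) x|
            ≤ ∑' n : ℕ, c⁻¹ * ρ ^ (n + 1) :=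
            ENNReal.tsum_le_tsum fun n => (abs_le_A _ x).trans (hAn n)
          _ = c⁻¹ * ((1 - ρ)⁻¹ * ρ) := by
            rw [ENNReal.tsum_mul_left]
            congr 1
            calc ∑' n : ℕ, ρ ^ (n + 1) = ∑' n : ℕ, ρ ^ n * ρ :=
                tsum_congr fun n => pow_succ ρ n
              _ = (1 - ρ)⁻¹ * ρ := by rw [ENNReal.tsum_mul_right, hgeo]
      exact ne_top_of_le_ne_top
        (ENNReal.mul_ne_top hcit (ENNReal.mul_ne_top honet hρt)) hb
    have hsum : ∀ x, Summable fun n => convpow a n x := fun x =>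
      (summable_nat_add_iff 1).mp (hsum1 x)
    set winv : (Fin d → ℤ) → ℝ := fun x => ∑' n, convpow a n x with hwinv
    -- total mass of the series of A's
    have hT : ∑' n : ℕ, A (convpow a n) ≠ ⊤ := by
      have hsplit := ENNReal.tsum_eq_add_tsum_ite (f := fun n => A (convpow a n)) 0
      rw [hsplit]
      apply ENNReal.add_ne_top.mpr
      constructor
      · rw [show convpow a 0 = (SO.kdelta : (Fin d → ℤ) → ℝ) from rfl, A_kdelta]
        exact one_ne_top
      · apply ne_top_of_le_ne_top (ENNReal.mul_ne_top hcit honet)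
        refine le_trans (ENNReal.tsum_le_tsum (g := fun n => c⁻¹ * ρ ^ n) fun n => ?_) ?_
        · split_ifs with h
          · exact zero_le
          · obtain ⟨m, rfl⟩ : ∃ m, n = m + 1 := ⟨n - 1, by omega⟩
            exact hAn m
        · rw [ENNReal.tsum_mul_left, hgeo]
    have hAwinv : A winv ≠ ⊤ := ne_top_of_le_ne_top hT (A_tsum_le _)
    have hSa : Summable fun z => |a z| :=
      summable_of_tsum_ne_top (g := fun z => |a z|) (by simpa [abs_abs, A] using hAat)
    have hSwinv : Summable fun z => |winv z| :=
      summable_of_tsum_ne_top (g := fun z => |winv z|) (by simpa [abs_abs, A] using hAwinv)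
    refine ⟨winv, fun x => rfl, ?_, ?_, ?_⟩
    · -- convergence in norm
      have key : ∀ N, 1 ≤ N → zetaNorm ζ
          (fun x => (∑ n ∈ Finset.range N, convpow a n x) - winv x) ≤ (1 - ρ)⁻¹ * ρ ^ N := by
        intro N hN
        have heq : ∀ x, (∑ n ∈ Finset.range N, convpow a n x) - winv x
            = -(∑' n : ℕ, convpow a (n + N) x) := by
          intro x
          have h := Summable.sum_add_tsum_nat_add N (hsum x)
          simp only [hwinv]
          linarith
        rw [zetaNorm_congr heq, zetaNorm_neg]
        calc zetaNorm ζ (fun x => ∑' n : ℕ, convpow a (n + N) x)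
            ≤ ∑' n : ℕ, zetaNorm ζ (convpow a (n + N)) := zetaNorm_tsum_le _
          _ ≤ ∑' n : ℕ, ρ ^ (n + N) := by
            apply ENNReal.tsum_le_tsum
            intro n
            obtain ⟨M, hM⟩ : ∃ M, n + N = M + 1 := ⟨n + N - 1, by omega⟩
            rw [hM]
            exact hpow M
          _ = (1 - ρ)⁻¹ * ρ ^ N := by
            rw [tsum_congr fun n => pow_add ρ n N, ENNReal.tsum_mul_right, hgeo]
      have hlim : Filter.Tendsto (fun N : ℕ => (1 - ρ)⁻¹ * ρ ^ N) Filter.atTop (nhds 0) := by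
        have := ENNReal.Tendsto.const_mul (a := (1 - ρ)⁻¹)
          (ENNReal.tendsto_pow_atTop_nhds_zero_of_lt_one hρ1) (Or.inr honet)
        simpa using this
      apply tendsto_of_tendsto_of_tendsto_of_le_of_le' tendsto_const_nhds hlim
        (Filter.Eventually.of_forall fun N => zero_le)
        (Filter.eventually_atTop.mpr ⟨1, key⟩)
    · -- convolution inverse identity
      intro x
      have hconva : conv a winv x = winv x - kdelta x := by
        have hjoint : Summable (Function.uncurry fun (n : ℕ) (y : Fin d → ℤ) =>
            a (x - y) * convpow a n y) := by
          apply summable_of_tsum_ne_top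
          apply ne_top_of_le_ne_top (ENNReal.mul_ne_top hAat hT)
          calc ∑' p : ℕ × (Fin d → ℤ),
              ENNReal.ofReal |Function.uncurry (fun (n : ℕ) (y : Fin d → ℤ) =>
                a (x - y) * convpow a n y) p|
              = ∑' (n : ℕ) (y : Fin d → ℤ), ENNReal.ofReal |a (x - y)| *
                ENNReal.ofReal |convpow a n y| := by
                rw [ENNReal.tsum_prod']
                exact tsum_congr fun n => tsum_congr fun y => by
                  simp only [Function.uncurry_apply_pair]
                  rw [abs_mul, ENNReal.ofReal_mul (abs_nonneg _)]
            _ ≤ ∑' (n : ℕ) (y : Fin d → ℤ), A a * ENNReal.ofReal |convpow a n y| :=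
                ENNReal.tsum_le_tsum fun n => ENNReal.tsum_le_tsum fun y =>
                  mul_le_mul_left (abs_le_A a (x - y)) _
            _ = A a * ∑' n : ℕ, A (convpow a n) := by
                rw [← ENNReal.tsum_mul_left]
                exact tsum_congr fun n => ENNReal.tsum_mul_left
        have step : conv a winv x = ∑' (n : ℕ) (y : Fin d → ℤ), a (x - y) * convpow a n y := by
          show (∑' y, a (x - y) * winv y) = _
          rw [tsum_congr fun y =>
            (tsum_mul_left (a := a (x - y)) (f := fun n => convpow a n y)).symm]
          exact Summable.tsum_comm hjoint
        have inner : ∀ n : ℕ, (∑' y, a (x - y) * convpow a n y) = convpow a (n + 1) x :=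
          fun n => rfl
        rw [step, tsum_congr inner]
        have h0 := Summable.tsum_eq_zero_add (hsum x)
        have : convpow a 0 x = kdelta x := rfl
        simp only [hwinv]
        linarith
      have hsplit : conv w winv x = winv x - conv a winv x := by
        show (∑' y, w (x - y) * winv y) = _
        have hrw : ∀ y, w (x - y) * winv y
            = kdelta (x - y) * winv y - a (x - y) * winv y := by
          intro y
          simp only [ha]
          ring
        have hS1 : Summable fun y => kdelta (x - y) * winv y := by
          apply summable_of_ne_finset_zero (s := {x})
          intro y hy
          have : x - y ≠ 0 := sub_ne_zero.mpr (by simpa [eq_comm] using hy)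
          simp [SO.kdelta, this]
        have hS2 : Summable fun y => a (x - y) * winv y :=
          summable_conv_term hSa hSwinv x
        rw [tsum_congr hrw, Summable.tsum_sub hS1 hS2]
        congr 1
        rw [tsum_eq_single x fun y hy => by
          have : x - y ≠ 0 := sub_ne_zero.mpr (Ne.symm hy)
          simp [SO.kdelta, this]]
        simp [SO.kdelta]
      rw [hsplit, hconva]
      ring
    · -- norm bound for the inverse
      have heq : ∀ x, winv x - kdelta x = ∑' n : ℕ, convpow a (n + 1) x := by
        intro x
        have h0 := Summable.tsum_eq_zero_add (hsum x)
        have : convpow a 0 x = kdelta x := rfl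
        simp only [hwinv]
        linarith
      rw [zetaNorm_congr heq]
      calc zetaNorm ζ (fun x => ∑' n : ℕ, convpow a (n + 1) x)
          ≤ ∑' n : ℕ, zetaNorm ζ (convpow a (n + 1)) := zetaNorm_tsum_le _
        _ ≤ ∑' n : ℕ, ρ ^ (n + 1) := ENNReal.tsum_le_tsum hpow
        _ = (1 - ρ)⁻¹ * ρ := by
            rw [tsum_congr fun n => pow_succ ρ n, ENNReal.tsum_mul_right, hgeo]
        _ = ρ / (1 - ρ) := by rw [div_eq_mul_inv, mul_comm]
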